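/- For every δ > 0 and every x ∈ ℝ with |x| ≥ δ/2, setting k = (√2/δ)·√(log(2/(π ε²))) for ε ∈ (0, √(2/(eπ))), the function f(x) = erf(kx) satisfies |f(x) − sgn(x)| ≤ ε, and moreover |f(x)| ≤ 1 for all x ∈ ℝ. -/

import Mathlib

/-- The error function `erf x = (2/√π) ∫₀ˣ e^{−t²} dt`. -/
noncomputable def erf (x : ℝ) : ℝ :=
  (2 / Real.sqrt Real.pi) * ∫ t in (0 : ℝ)..x, Real.exp (-t ^ 2)

/-- The sign function (value at 0 irrelevant here). -/
noncomputable def sgn (x : ℝ) : ℝ := if 0 < x then 1 else -1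


open MeasureTheory Set Filter Real

lemma gauss_int : Integrable (fun t : ℝ => Real.exp (-t ^ 2)) := by
  simpa using integrable_exp_neg_mul_sq (by norm_num : (0:ℝ) < 1)

lemma gauss_total : ∫ t : ℝ, Real.exp (-t ^ 2) = Real.sqrt Real.pi := by
  simpa using integral_gaussian 1

lemma interval_eq (x : ℝ) :
    ∫ t in (0:ℝ)..x, Real.exp (-t ^ 2)
      = (∫ t in Ioi (0:ℝ), Real.exp (-t ^ 2)) - ∫ t in Ioi x, Real.exp (-t ^ 2) := by
  have h := gauss_int
  rw [← intervalIntegral.integral_Iic_sub_Iic h.integrableOn h.integrableOn]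
  have h0 := intervalIntegral.integral_Iic_add_Ioi (b := (0:ℝ)) h.integrableOn h.integrableOn
  have hx := intervalIntegral.integral_Iic_add_Ioi (b := x) h.integrableOn h.integrableOn
  linarith

lemma tail_nonneg (x : ℝ) : 0 ≤ ∫ t in Ioi x, Real.exp (-t ^ 2) :=
  setIntegral_nonneg measurableSet_Ioi (fun t _ => (Real.exp_pos _).le)

lemma tail_le_total (x : ℝ) :
    ∫ t in Ioi x, Real.exp (-t ^ 2) ≤ Real.sqrt Real.pi := by
  rw [← gauss_total]
  exact setIntegral_le_integral gauss_int (Filter.Eventually.of_forall fun t => (Real.exp_pos _).le)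

lemma tail_mono {x y : ℝ} (h : x ≤ y) :
    ∫ t in Ioi y, Real.exp (-t ^ 2) ≤ ∫ t in Ioi x, Real.exp (-t ^ 2) :=
  setIntegral_mono_set gauss_int.integrableOn
    (Filter.Eventually.of_forall fun t => (Real.exp_pos _).le)
    (HasSubset.Subset.eventuallyLE (Ioi_subset_Ioi h))

lemma int_t_exp (y : ℝ) (hy : 0 ≤ y) :
    ∫ t in Ioi y, t * Real.exp (-t ^ 2) = Real.exp (-y ^ 2) / 2 := by
  have hderiv : ∀ t ∈ Ici y, HasDerivAt (fun t : ℝ => -Real.exp (-t ^ 2) / 2)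
      (t * Real.exp (-t ^ 2)) t := by
    intro t _
    have h1 : HasDerivAt (fun t : ℝ => -t ^ 2) (-(2 * t)) t := by
      simpa using ((hasDerivAt_pow 2 t).fun_neg)
    have := (h1.exp).fun_neg.div_const 2
    exact this.congr_deriv (by ring)
  have hpos : ∀ t ∈ Ioi y, 0 ≤ t * Real.exp (-t ^ 2) := fun t ht =>
    mul_nonneg (hy.trans (le_of_lt ht)) (Real.exp_pos _).le
  have hlim : Tendsto (fun t : ℝ => -Real.exp (-t ^ 2) / 2) atTop (nhds 0) := by
    have h2 : Tendsto (fun t : ℝ => -t ^ 2) atTop atBot := by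
      apply tendsto_neg_atBot_iff.mpr
      exact tendsto_pow_atTop (by norm_num)
    have := (Real.tendsto_exp_atBot.comp h2).neg.div_const 2
    simpa using this
  have := MeasureTheory.integral_Ioi_of_hasDerivAt_of_nonneg' hderiv hpos hlim
  rw [this]; ring

lemma tail_bound {y : ℝ} (hy : 0 < y) :
    ∫ t in Ioi y, Real.exp (-t ^ 2) ≤ Real.exp (-y ^ 2) / (2 * y) := by
  have hint : IntegrableOn (fun t : ℝ => t * Real.exp (-t ^ 2)) (Ioi y) := by
    have hderiv : ∀ t ∈ Ici y, HasDerivAt (fun t : ℝ => -Real.exp (-t ^ 2) / 2)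
        (t * Real.exp (-t ^ 2)) t := by
      intro t _
      have h1 : HasDerivAt (fun t : ℝ => -t ^ 2) (-(2 * t)) t := by
        simpa using ((hasDerivAt_pow 2 t).fun_neg)
      have := (h1.exp).fun_neg.div_const 2
      exact this.congr_deriv (by ring)
    have hpos : ∀ t ∈ Ioi y, 0 ≤ t * Real.exp (-t ^ 2) := fun t ht =>
      mul_nonneg (hy.le.trans (le_of_lt ht)) (Real.exp_pos _).le
    have hlim : Tendsto (fun t : ℝ => -Real.exp (-t ^ 2) / 2) atTop (nhds 0) := by
      have h2 : Tendsto (fun t : ℝ => -t ^ 2) atTop atBot := by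
        apply tendsto_neg_atBot_iff.mpr
        exact tendsto_pow_atTop (by norm_num)
      have := (Real.tendsto_exp_atBot.comp h2).neg.div_const 2
      simpa using this
    exact integrableOn_Ioi_deriv_of_nonneg' hderiv hpos hlim
  have hcmp : ∫ t in Ioi y, Real.exp (-t ^ 2)
      ≤ ∫ t in Ioi y, (t / y) * Real.exp (-t ^ 2) := by
    apply setIntegral_mono_on gauss_int.integrableOn
    · simpa [div_mul_eq_mul_div, IntegrableOn] using hint.div_const y
    · exact measurableSet_Ioi
    · intro t ht
      have h1 : 1 ≤ t / y := (one_le_div hy).mpr (le_of_lt ht)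
      nlinarith [(Real.exp_pos (-t ^ 2)).le, Real.exp_pos (-t^2)]
  have : ∫ t in Ioi y, (t / y) * Real.exp (-t ^ 2)
      = (∫ t in Ioi y, t * Real.exp (-t ^ 2)) / y := by
    rw [← integral_div]
    congr 1; ext t; ring
  rw [this, int_t_exp y hy.le] at hcmp
  calc ∫ t in Ioi y, Real.exp (-t ^ 2) ≤ Real.exp (-y ^ 2) / 2 / y := hcmp
    _ = Real.exp (-y ^ 2) / (2 * y) := by ring

lemma sqrt_pi_pos : 0 < Real.sqrt Real.pi := Real.sqrt_pos.mpr Real.pi_pos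

lemma erf_eq (x : ℝ) :
    erf x = 1 - (2 / Real.sqrt Real.pi) * ∫ t in Ioi x, Real.exp (-t ^ 2) := by
  have h0 : ∫ t in Ioi (0:ℝ), Real.exp (-t ^ 2) = Real.sqrt Real.pi / 2 := by
    simpa using integral_gaussian_Ioi 1
  rw [erf, interval_eq, h0, mul_sub]
  have : (2 / Real.sqrt Real.pi) * (Real.sqrt Real.pi / 2) = 1 := by
    field_simp
  rw [this]

lemma erf_abs_le (x : ℝ) : |erf x| ≤ 1 := by
  rw [erf_eq, abs_le]
  have h1 := tail_nonneg x
  have h2 := tail_le_total x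
  have hc : 0 < 2 / Real.sqrt Real.pi := by positivity
  have h3 : (2 / Real.sqrt Real.pi) * ∫ t in Ioi x, Real.exp (-t ^ 2) ≤ 2 := by
    have := mul_le_mul_of_nonneg_left h2 hc.le
    have he : (2 / Real.sqrt Real.pi) * Real.sqrt Real.pi = 2 := by
      field_simp
    linarith
  constructor
  · nlinarith
  · nlinarith

lemma erf_neg (x : ℝ) : erf (-x) = - erf x := by
  unfold erf
  have h := intervalIntegral.integral_comp_neg (a := (0:ℝ)) (b := x)
    (fun t => Real.exp (-t ^ 2))
  simp only [neg_zero, neg_sq] at h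
  have h2 : ∫ t in (0:ℝ)..(-x), Real.exp (-t ^ 2)
      = - ∫ t in (0:ℝ)..x, Real.exp (-t ^ 2) := by
    rw [intervalIntegral.integral_symm (-x) 0, ← h]
  rw [h2]; ring

/-- For `δ > 0`, `ε ∈ (0, √(2/(eπ)))` and
`k = (√2/δ)·√(log(2/(πε²)))`, the function `f(x) = erf(kx)` satisfies `|f(x)| ≤ 1`
for all `x`, and `|f(x) − sgn(x)| ≤ ε` whenever `|x| ≥ δ/2`. -/
theorem stmt5 (δ ε k : ℝ) (hδ : 0 < δ) (hε : 0 < ε)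
    (hε' : ε < Real.sqrt (2 / (Real.exp 1 * Real.pi)))
    (hk : k = (Real.sqrt 2 / δ) * Real.sqrt (Real.log (2 / (Real.pi * ε ^ 2)))) :
    (∀ x : ℝ, |erf (k * x)| ≤ 1) ∧
    (∀ x : ℝ, δ / 2 ≤ |x| → |erf (k * x) - sgn x| ≤ ε) := by
  have hπ := Real.pi_pos
  set L := Real.log (2 / (Real.pi * ε ^ 2)) with hLdef
  have hεsq : ε ^ 2 < 2 / (Real.exp 1 * Real.pi) :=
    (Real.lt_sqrt hε.le).mp hε'
  have hE := Real.exp_pos 1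
  have hexp1 : Real.exp 1 ≤ 2 / (Real.pi * ε ^ 2) := by
    rw [le_div_iff₀ (by positivity)]
    have h1 : ε ^ 2 * (Real.exp 1 * Real.pi) < 2 :=
      (lt_div_iff₀ (by positivity)).mp hεsq
    nlinarith
  have hL : 1 ≤ L := by
    rw [hLdef, Real.le_log_iff_exp_le (by positivity)]
    exact hexp1
  have hL0 : 0 ≤ L := by linarith
  have hexpL : Real.exp L = 2 / (Real.pi * ε ^ 2) := Real.exp_log (by positivity)
  have hk0 : 0 < k := by
    rw [hk]
    exact mul_pos (div_pos (Real.sqrt_pos.mpr two_pos) hδ)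
      (Real.sqrt_pos.mpr (by linarith))
  set y₀ := k * (δ / 2) with hy₀
  have hy0pos : 0 < y₀ := mul_pos hk0 (by linarith)
  have hs2 : Real.sqrt 2 ^ 2 = 2 := Real.sq_sqrt two_pos.le
  have hsL : Real.sqrt L ^ 2 = L := Real.sq_sqrt hL0
  have hk2 : k ^ 2 = 2 * L / δ ^ 2 := by
    rw [hk, mul_pow, div_pow, hs2, hsL, div_mul_eq_mul_div]
  have hy0sq : y₀ ^ 2 = L / 2 := by
    rw [hy₀, mul_pow, hk2]
    field_simp
  set B := Real.exp (-(L / 2)) with hB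
  have hB0 : 0 < B := Real.exp_pos _
  have hBsq : B ^ 2 = Real.pi * ε ^ 2 / 2 := by
    have h1 : B ^ 2 = Real.exp (-L) := by
      rw [hB, pow_two, ← Real.exp_add]
      congr 1; ring
    rw [h1, Real.exp_neg, hexpL]
    field_simp
  set c := 2 / Real.sqrt Real.pi with hc
  have hc0 : 0 < c := by positivity
  set A := c * (Real.exp (-y₀ ^ 2) / (2 * y₀)) with hA
  have hAB : A = B / (Real.sqrt Real.pi * y₀) := by
    rw [hA, hB, hc, hy0sq]
    field_simp
  have hA0 : 0 ≤ A := by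
    rw [hAB]; positivity
  have hAsq : A ^ 2 ≤ ε ^ 2 := by
    have hπsq : Real.sqrt Real.pi ^ 2 = Real.pi := Real.sq_sqrt hπ.le
    have h1 : A ^ 2 = ε ^ 2 / L := by
      rw [hAB, div_pow, mul_pow, hπsq, hBsq, hy0sq]
      field_simp
    rw [h1]
    rw [div_le_iff₀ (by linarith)]
    nlinarith
  have hAε : A ≤ ε := by nlinarith
  have key : ∀ x : ℝ, δ / 2 ≤ x → |erf (k * x) - 1| ≤ ε := by
    intro x hx
    have hkx : y₀ ≤ k * x := by
      rw [hy₀]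
      exact mul_le_mul_of_nonneg_left hx hk0.le
    rw [erf_eq]
    have hI0 := tail_nonneg (k * x)
    have h1 : |1 - c * (∫ t in Ioi (k * x), Real.exp (-t ^ 2)) - 1|
        = c * ∫ t in Ioi (k * x), Real.exp (-t ^ 2) := by
      rw [show (1 : ℝ) - c * (∫ t in Ioi (k * x), Real.exp (-t ^ 2)) - 1
          = -(c * ∫ t in Ioi (k * x), Real.exp (-t ^ 2)) by ring, abs_neg,
        abs_of_nonneg (by positivity)]
    rw [h1]
    calc c * ∫ t in Ioi (k * x), Real.exp (-t ^ 2)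
        ≤ c * ∫ t in Ioi y₀, Real.exp (-t ^ 2) :=
          mul_le_mul_of_nonneg_left (tail_mono hkx) hc0.le
      _ ≤ A := mul_le_mul_of_nonneg_left (tail_bound hy0pos) hc0.le
      _ ≤ ε := hAε
  refine ⟨fun x => erf_abs_le _, fun x hx => ?_⟩
  by_cases hxpos : 0 < x
  · rw [show sgn x = 1 by rw [sgn, if_pos hxpos]]
    exact key x (by rwa [abs_of_pos hxpos] at hx)
  · push_neg at hxpos
    have hxneg : x < 0 := by
      rcases lt_or_eq_of_le hxpos with h | h
      · exact h
      · exfalso; rw [h] at hx; simp at hx; linarith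
    rw [show sgn x = -1 by rw [sgn, if_neg (not_lt.mpr hxneg.le)]]
    have h1 : erf (k * x) = - erf (k * (-x)) := by
      rw [show k * x = -(k * (-x)) by ring, erf_neg]
    rw [h1, show -erf (k * (-x)) - (-1) = -(erf (k * (-x)) - 1) by ring, abs_neg]
    exact key (-x) (by rwa [abs_of_neg hxneg] at hx)
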